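/- arXiv:1805.01733 — 14 statements merged into one kernel-verified Lean document; each statement's English description precedes it below -/
import Mathlib

section
/- Let D be a division ring, a, b, c, d : D with b ≠ 0, d ≠ 0, Δ = a*d - c*b ≠ 0, a - b*d⁻¹*c ≠ 0 and c - d*b⁻¹*a ≠ 0. Let A be the 2×2 matrix with rows (a, b) and (c, d), let L be the 2×2 matrix with rows (Δ⁻¹*d, -Δ⁻¹*b) and (-Δ⁻¹*c, Δ⁻¹*a), and let T_L be the 2×2 matrix with rows (Δ⁻¹*(d - Δ*(a - b*d⁻¹*c)⁻¹), -Δ⁻¹*(b + Δ*(c - d*b⁻¹*a)⁻¹)) and (Δ⁻¹*⁅a,c⁆*(a - b*d⁻¹*c)⁻¹, Δ⁻¹*⁅a,c⁆*(c - d*b⁻¹*a)⁻¹). Then T_L*A = L*A - 1, i.e. T_L is a left decomposition of the left residue. -/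
/-- `T_L` is a left decomposition of the left residue: `T_L * A = L * A - 1`.
Here `⁅x,y⁆ = x*y - y*x` is written explicitly. -/
theorem left_decomposition {D : Type*} [DivisionRing D] (a b c d Δ : D)
    (hb : b ≠ 0) (hd : d ≠ 0)
    (hΔdef : Δ = a * d - c * b) (hΔ : Δ ≠ 0)
    (h1 : a - b * d⁻¹ * c ≠ 0) (h2 : c - d * b⁻¹ * a ≠ 0)
    (A L TL : Matrix (Fin 2) (Fin 2) D)
    (hA : A = !![a, b; c, d])
    (hL : L = !![Δ⁻¹ * d, -(Δ⁻¹ * b); -(Δ⁻¹ * c), Δ⁻¹ * a])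
    (hTL : TL = !![Δ⁻¹ * (d - Δ * (a - b * d⁻¹ * c)⁻¹),
                   -(Δ⁻¹ * (b + Δ * (c - d * b⁻¹ * a)⁻¹));
                   Δ⁻¹ * (a * c - c * a) * (a - b * d⁻¹ * c)⁻¹,
                   Δ⁻¹ * (a * c - c * a) * (c - d * b⁻¹ * a)⁻¹]) :
    TL * A = L * A - 1 := by
  set e := a - b * d⁻¹ * c with he
  set f := c - d * b⁻¹ * a with hf
  have key0 : b⁻¹ * e = -(d⁻¹ * f) := by
    rw [he, hf, mul_sub, mul_sub, mul_assoc b, inv_mul_cancel_left₀ hb,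
      mul_assoc d, inv_mul_cancel_left₀ hd]
    abel
  have key1 : e⁻¹ * b = -(f⁻¹ * d) := by
    have := congrArg Inv.inv key0
    simpa [mul_inv_rev, inv_neg] using this
  have key2 : e⁻¹ * a + f⁻¹ * c = 1 := by
    have ha : a = e + b * d⁻¹ * c := by rw [he]; abel
    rw [ha, mul_add, inv_mul_cancel₀ h1, mul_assoc b, ← mul_assoc e⁻¹, key1,
      neg_mul, mul_assoc f⁻¹, mul_inv_cancel_left₀ hd]
    abel
  have hΔi : Δ⁻¹ * Δ = 1 := inv_mul_cancel₀ hΔ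
  subst hA hL hTL
  ext i j
  fin_cases i <;> fin_cases j <;>
      simp [Matrix.mul_apply, Fin.sum_univ_two]
  · simp only [mul_sub, sub_mul, mul_add, add_mul, neg_add, neg_mul, mul_assoc,
      inv_mul_cancel_left₀ hΔ]
    rw [← key2]; abel
  · simp only [mul_sub, sub_mul, mul_add, add_mul, neg_add, neg_mul, mul_assoc,
      inv_mul_cancel_left₀ hΔ]
    rw [key1]; abel
  · rw [mul_assoc (Δ⁻¹ * (a * c - c * a)) _ a, mul_assoc (Δ⁻¹ * (a * c - c * a)) _ c,
      ← mul_add, key2, mul_one]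
    noncomm_ring
  · rw [mul_assoc (Δ⁻¹ * (a * c - c * a)) _ b, mul_assoc (Δ⁻¹ * (a * c - c * a)) _ d,
      ← mul_add, show e⁻¹ * b + f⁻¹ * d = 0 by rw [key1]; abel, mul_zero,
      show -(Δ⁻¹ * c * b) + Δ⁻¹ * a * d = Δ⁻¹ * (a * d - c * b) by noncomm_ring,
      ← hΔdef, hΔi, sub_self]
end

section
/- Let D be a division ring and a, b, c, d : D with b ≠ 0, d ≠ 0, a - b*d⁻¹*c ≠ 0 and c - d*b⁻¹*a ≠ 0, and set Δ = a*d - c*b. Then d - Δ*(a - b*d⁻¹*c)⁻¹ = (⁅b,d⁆*d⁻¹*c + ⁅d,a⁆ + ⁅c,b⁆)*(a - b*d⁻¹*c)⁻¹ and -(b + Δ*(c - d*b⁻¹*a)⁻¹) = (⁅d,a⁆ + ⁅c,b⁆ + ⁅b,d⁆*b⁻¹*a)*(c - d*b⁻¹*a)⁻¹ (the commutator form of the first row of the left decomposition matrix). -/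
/-- Commutator form of the first row of the left decomposition matrix.
Here `⁅x,y⁆ = x*y - y*x` is written explicitly. -/
theorem left_decomposition_first_row_commutator_form {D : Type*} [DivisionRing D]
    (a b c d Δ : D) (hb : b ≠ 0) (hd : d ≠ 0)
    (h1 : a - b * d⁻¹ * c ≠ 0) (h2 : c - d * b⁻¹ * a ≠ 0)
    (hΔdef : Δ = a * d - c * b) :
    d - Δ * (a - b * d⁻¹ * c)⁻¹ =
      ((b * d - d * b) * d⁻¹ * c + (d * a - a * d) + (c * b - b * c)) *
        (a - b * d⁻¹ * c)⁻¹ ∧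
    -(b + Δ * (c - d * b⁻¹ * a)⁻¹) =
      ((d * a - a * d) + (c * b - b * c) + (b * d - d * b) * b⁻¹ * a) *
        (c - d * b⁻¹ * a)⁻¹ := by
  constructor
  · have hX : (a - b * d⁻¹ * c) * (a - b * d⁻¹ * c)⁻¹ = 1 := mul_inv_cancel₀ h1
    calc d - Δ * (a - b * d⁻¹ * c)⁻¹
        = (d * (a - b * d⁻¹ * c) - Δ) * (a - b * d⁻¹ * c)⁻¹ := by
          rw [sub_mul, mul_assoc d (a - b * d⁻¹ * c), hX, mul_one]
      _ = _ := by
          congr 1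
          rw [hΔdef]
          simp only [sub_mul, mul_assoc, mul_inv_cancel₀ hd, mul_one,
            mul_inv_cancel_left₀ hd]
          noncomm_ring
  · have hX : (c - d * b⁻¹ * a) * (c - d * b⁻¹ * a)⁻¹ = 1 := mul_inv_cancel₀ h2
    calc -(b + Δ * (c - d * b⁻¹ * a)⁻¹)
        = (-(b * (c - d * b⁻¹ * a)) - Δ) * (c - d * b⁻¹ * a)⁻¹ := by
          rw [sub_mul, neg_mul, mul_assoc b (c - d * b⁻¹ * a), hX, mul_one, neg_add, sub_eq_add_neg]
          abel
      _ = _ := by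
          congr 1
          rw [hΔdef]
          simp only [sub_mul, mul_assoc, mul_inv_cancel₀ hb, mul_one,
            mul_inv_cancel_left₀ hb]
          noncomm_ring
end

section
/- Let D be a division ring, a, b, c, d : D all nonzero, Δ = a*d - c*b ≠ 0, and suppose a - b*d⁻¹*c, c - d*b⁻¹*a, b - a*c⁻¹*d and d - c*a⁻¹*b are all nonzero. Let A be the 2×2 matrix with rows (a, b) and (c, d), let R be the 2×2 matrix with rows (d*Δ⁻¹, -b*Δ⁻¹) and (-c*Δ⁻¹, a*Δ⁻¹), and let T_R be the 2×2 matrix with rows ((d - (a - b*d⁻¹*c)⁻¹*Δ)*Δ⁻¹, (-b - (c - d*b⁻¹*a)⁻¹*Δ)*Δ⁻¹) and ((-c - (b - a*c⁻¹*d)⁻¹*Δ)*Δ⁻¹, (a - (d - c*a⁻¹*b)⁻¹*Δ)*Δ⁻¹). Then A*T_R = A*R - 1, i.e. T_R is a right decomposition of the right residue. -/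
section
variable {D : Type*} [DivisionRing D]

lemma fact1 (x y z w : D) (hx : x ≠ 0) (hz : z ≠ 0) :
    y - x*z⁻¹*w = -(x*z⁻¹) * (w - z*(x⁻¹*y)) := by
  rw [mul_sub, neg_mul, neg_mul, sub_neg_eq_add, ← mul_assoc (x*z⁻¹) z,
    mul_assoc x z⁻¹ z, inv_mul_cancel₀ hz, mul_one, mul_assoc x,
    ← mul_assoc x x⁻¹, mul_inv_cancel₀ hx, one_mul]
  abel

lemma inv2 (x y z w : D) (hx : x ≠ 0) (hz : z ≠ 0) :
    (y - x*z⁻¹*w)⁻¹ = -((w - z*(x⁻¹*y))⁻¹ * (z * x⁻¹)) := by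
  rw [fact1 x y z w hx hz, neg_mul, inv_neg, mul_inv_rev, mul_inv_rev, inv_inv]

lemma hua (x y z w : D) (hx : x ≠ 0) (hw : w ≠ 0) (h : w - z*(x⁻¹*y) ≠ 0) :
    (x - y*w⁻¹*z)⁻¹ = x⁻¹ + x⁻¹ * (y * ((w - z*(x⁻¹*y))⁻¹ * (z * x⁻¹))) := by
  apply inv_eq_of_mul_eq_one_right
  have key : (x - y*w⁻¹*z) * x⁻¹ * y = y * w⁻¹ * (w - z*(x⁻¹*y)) := by
    rw [sub_mul, sub_mul, mul_sub, mul_assoc x, ← mul_assoc x x⁻¹,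
      mul_inv_cancel₀ hx, one_mul, mul_assoc y w⁻¹ w,
      inv_mul_cancel₀ hw, mul_one, mul_assoc (y*w⁻¹*z) x⁻¹, mul_assoc (y*w⁻¹) z]
  rw [mul_add, ← mul_assoc, ← mul_assoc, key, mul_assoc (y*w⁻¹),
    ← mul_assoc (w - z*(x⁻¹*y)), mul_inv_cancel₀ h, one_mul, sub_mul,
    mul_inv_cancel₀ hx, mul_assoc (y*w⁻¹) z x⁻¹]
  abel

-- key identity (1)/(4): x*(x - y*w⁻¹*z)⁻¹ + y*(y - x*z⁻¹*w)⁻¹ = 1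
lemma keyone (x y z w : D) (hx : x ≠ 0) (hz : z ≠ 0) (hw : w ≠ 0)
    (h : w - z*(x⁻¹*y) ≠ 0) :
    x*(x - y*w⁻¹*z)⁻¹ + y*(y - x*z⁻¹*w)⁻¹ = 1 := by
  rw [hua x y z w hx hw h, inv2 x y z w hx hz, mul_add, mul_inv_cancel₀ hx,
    ← mul_assoc x x⁻¹, mul_inv_cancel₀ hx, one_mul, mul_neg]
  abel

-- key identity (2)/(3): x*(z - w*y⁻¹*x)⁻¹ + y*(w - z*(x⁻¹*y))⁻¹ = 0
lemma keyzero (x y z w : D) (hx : x ≠ 0) (hy : y ≠ 0)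
    (h : w - z*(x⁻¹*y) ≠ 0) :
    x*(z - w*y⁻¹*x)⁻¹ + y*(w - z*(x⁻¹*y))⁻¹ = 0 := by
  have : (z - w*y⁻¹*x)⁻¹ = -(x⁻¹ * (y * (w - z*(x⁻¹*y))⁻¹)) := by
    apply inv_eq_of_mul_eq_one_right
    have key : (z - w*y⁻¹*x) * (x⁻¹ * y) = -(w - z*(x⁻¹*y)) := by
      rw [sub_mul, mul_assoc (w*y⁻¹) x, ← mul_assoc x x⁻¹, mul_inv_cancel₀ hx,
        one_mul, mul_assoc w y⁻¹ y, inv_mul_cancel₀ hy, mul_one, neg_sub]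
    rw [mul_neg, ← mul_assoc, ← mul_assoc, mul_assoc (z - w*y⁻¹*x) x⁻¹ y, key,
      neg_mul, mul_inv_cancel₀ h, neg_neg]
  rw [this, mul_neg, ← mul_assoc, ← mul_assoc, mul_inv_cancel₀ hx, one_mul]
  abel

end


/-- `T_R` is a right decomposition of the right residue: `A * T_R = A * R - 1`. -/
theorem right_decomposition {D : Type*} [DivisionRing D] (a b c d Δ : D)
    (ha : a ≠ 0) (hb : b ≠ 0) (hc : c ≠ 0) (hd : d ≠ 0)
    (hΔdef : Δ = a * d - c * b) (hΔ : Δ ≠ 0)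
    (h1 : a - b * d⁻¹ * c ≠ 0) (h2 : c - d * b⁻¹ * a ≠ 0)
    (h3 : b - a * c⁻¹ * d ≠ 0) (h4 : d - c * a⁻¹ * b ≠ 0)
    (A R TR : Matrix (Fin 2) (Fin 2) D)
    (hA : A = !![a, b; c, d])
    (hR : R = !![d * Δ⁻¹, -(b * Δ⁻¹); -(c * Δ⁻¹), a * Δ⁻¹])
    (hTR : TR = !![(d - (a - b * d⁻¹ * c)⁻¹ * Δ) * Δ⁻¹,
                   (-b - (c - d * b⁻¹ * a)⁻¹ * Δ) * Δ⁻¹;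
                   (-c - (b - a * c⁻¹ * d)⁻¹ * Δ) * Δ⁻¹,
                   (a - (d - c * a⁻¹ * b)⁻¹ * Δ) * Δ⁻¹]) :
    A * TR = A * R - 1 := by
  have h4' : d - c*(a⁻¹*b) ≠ 0 := by rwa [← mul_assoc]
  have h3' : b - a*(c⁻¹*d) ≠ 0 := by rwa [← mul_assoc]
  set M : Matrix (Fin 2) (Fin 2) D :=
    !![(a - b*d⁻¹*c)⁻¹, (c - d*b⁻¹*a)⁻¹; (b - a*c⁻¹*d)⁻¹, (d - c*a⁻¹*b)⁻¹] with hMdef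
  have hTR' : TR = R - M := by
    rw [hTR, hR, hMdef]
    ext i j
    fin_cases i <;> fin_cases j <;>
      simp [Matrix.sub_apply] <;>
      rw [sub_mul, mul_assoc, mul_inv_cancel₀ hΔ, mul_one] <;>
      rw [neg_mul]
  have hAM : A * M = 1 := by
    rw [hA, hMdef]
    ext i j
    fin_cases i <;> fin_cases j <;>
      simp [Matrix.mul_apply, Fin.sum_univ_two, Matrix.one_apply]
    · exact keyone a b c d ha hc hd h4'
    · rw [mul_assoc c a⁻¹ b]; exact keyzero a b c d ha hb h4'
    · rw [mul_assoc a c⁻¹ d]; exact keyzero c d a b hc hd h3'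
    · exact keyone c d a b hc ha hb h3'
  rw [hTR', Matrix.mul_sub, hAM]
end

section
/- Let D be a division ring, a, b, c, d : D with b ≠ 0, d ≠ 0, Δ = a*d - c*b ≠ 0, a - b*d⁻¹*c ≠ 0 and c - d*b⁻¹*a ≠ 0. Let A be the 2×2 matrix with rows (a, b) and (c, d), let L be the 2×2 matrix with rows (Δ⁻¹*d, -Δ⁻¹*b) and (-Δ⁻¹*c, Δ⁻¹*a), and let T_L be the 2×2 matrix with rows (Δ⁻¹*(d - Δ*(a - b*d⁻¹*c)⁻¹), -Δ⁻¹*(b + Δ*(c - d*b⁻¹*a)⁻¹)) and (Δ⁻¹*⁅a,c⁆*(a - b*d⁻¹*c)⁻¹, Δ⁻¹*⁅a,c⁆*(c - d*b⁻¹*a)⁻¹). Then (L - T_L)*A = 1, i.e. L - T_L is a left inverse of A. -/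
/-- `L - T_L` is a left inverse of `A`. Here `⁅x,y⁆ = x*y - y*x` is written explicitly. -/
theorem left_inverse_via_decomposition {D : Type*} [DivisionRing D] (a b c d Δ : D)
    (hb : b ≠ 0) (hd : d ≠ 0)
    (hΔdef : Δ = a * d - c * b) (hΔ : Δ ≠ 0)
    (h1 : a - b * d⁻¹ * c ≠ 0) (h2 : c - d * b⁻¹ * a ≠ 0)
    (A L TL : Matrix (Fin 2) (Fin 2) D)
    (hA : A = !![a, b; c, d])
    (hL : L = !![Δ⁻¹ * d, -(Δ⁻¹ * b); -(Δ⁻¹ * c), Δ⁻¹ * a])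
    (hTL : TL = !![Δ⁻¹ * (d - Δ * (a - b * d⁻¹ * c)⁻¹),
                   -(Δ⁻¹ * (b + Δ * (c - d * b⁻¹ * a)⁻¹));
                   Δ⁻¹ * (a * c - c * a) * (a - b * d⁻¹ * c)⁻¹,
                   Δ⁻¹ * (a * c - c * a) * (c - d * b⁻¹ * a)⁻¹]) :
    (L - TL) * A = 1 := by
  set e := (a - b * d⁻¹ * c)⁻¹ with he
  set f := (c - d * b⁻¹ * a)⁻¹ with hf
  -- the auxiliary element w
  have hew : a - b * d⁻¹ * c = b * (b⁻¹ * a - d⁻¹ * c) := by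
    rw [mul_sub, mul_inv_cancel_left₀ hb, mul_assoc]
  have hfw : c - d * b⁻¹ * a = -(d * (b⁻¹ * a - d⁻¹ * c)) := by
    rw [mul_sub, mul_inv_cancel_left₀ hd, neg_sub, mul_assoc]
  have hw : b⁻¹ * a - d⁻¹ * c ≠ 0 := by
    intro h
    apply h1
    rw [hew, h, mul_zero]
  have heval : e = (b⁻¹ * a - d⁻¹ * c)⁻¹ * b⁻¹ := by
    rw [he, hew, mul_inv_rev]
  have hfval : f = -((b⁻¹ * a - d⁻¹ * c)⁻¹ * d⁻¹) := by
    rw [hf, hfw, inv_neg, mul_inv_rev]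
  have key1 : e * a + f * c = 1 := by
    rw [heval, hfval, neg_mul, mul_assoc, mul_assoc, ← sub_eq_add_neg, ← mul_sub,
      inv_mul_cancel₀ hw]
  have key2 : e * b + f * d = 0 := by
    rw [heval, hfval, neg_mul, mul_assoc, mul_assoc, inv_mul_cancel₀ hb, inv_mul_cancel₀ hd,
      add_neg_cancel]
  subst hA hL hTL
  ext i j
  fin_cases i <;> fin_cases j <;>
    simp [Matrix.mul_apply, Fin.sum_univ_two, Matrix.one_apply]
  · -- (0,0)
    calc (Δ⁻¹ * d - Δ⁻¹ * (d - Δ * e)) * a +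
          (-(Δ⁻¹ * b) + Δ⁻¹ * (b + Δ * f)) * c
        = (Δ⁻¹ * (Δ * e)) * a + (Δ⁻¹ * (Δ * f)) * c := by noncomm_ring
      _ = e * a + f * c := by rw [inv_mul_cancel_left₀ hΔ, inv_mul_cancel_left₀ hΔ]
      _ = 1 := key1
  · -- (0,1)
    calc (Δ⁻¹ * d - Δ⁻¹ * (d - Δ * e)) * b +
          (-(Δ⁻¹ * b) + Δ⁻¹ * (b + Δ * f)) * d
        = (Δ⁻¹ * (Δ * e)) * b + (Δ⁻¹ * (Δ * f)) * d := by noncomm_ring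
      _ = e * b + f * d := by rw [inv_mul_cancel_left₀ hΔ, inv_mul_cancel_left₀ hΔ]
      _ = 0 := key2
  · -- (1,0)
    calc (-(Δ⁻¹ * c) - Δ⁻¹ * (a * c - c * a) * e) * a +
          (Δ⁻¹ * a - Δ⁻¹ * (a * c - c * a) * f) * c
        = Δ⁻¹ * (a * c - c * a) -
            Δ⁻¹ * (a * c - c * a) * (e * a + f * c) := by noncomm_ring
      _ = Δ⁻¹ * (a * c - c * a) -
            Δ⁻¹ * (a * c - c * a) * 1 := by rw [key1]
      _ = 0 := by noncomm_ring
  · -- (1,1)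
    calc (-(Δ⁻¹ * c) - Δ⁻¹ * (a * c - c * a) * e) * b +
          (Δ⁻¹ * a - Δ⁻¹ * (a * c - c * a) * f) * d
        = Δ⁻¹ * (a * d - c * b) -
            Δ⁻¹ * (a * c - c * a) * (e * b + f * d) := by noncomm_ring
      _ = Δ⁻¹ * Δ - Δ⁻¹ * (a * c - c * a) * 0 := by rw [key2, ← hΔdef]
      _ = 1 := by rw [inv_mul_cancel₀ hΔ, mul_zero, sub_zero]
end

section
/- Let D be a division ring, a, b, c, d : D all nonzero, Δ = a*d - c*b ≠ 0, and suppose a - b*d⁻¹*c, c - d*b⁻¹*a, b - a*c⁻¹*d and d - c*a⁻¹*b are all nonzero. Let A be the 2×2 matrix with rows (a, b) and (c, d), let R be the 2×2 matrix with rows (d*Δ⁻¹, -b*Δ⁻¹) and (-c*Δ⁻¹, a*Δ⁻¹), and let T_R be the 2×2 matrix with rows ((d - (a - b*d⁻¹*c)⁻¹*Δ)*Δ⁻¹, (-b - (c - d*b⁻¹*a)⁻¹*Δ)*Δ⁻¹) and ((-c - (b - a*c⁻¹*d)⁻¹*Δ)*Δ⁻¹, (a - (d - c*a⁻¹*b)⁻¹*Δ)*Δ⁻¹).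 Then A*(R - T_R) = 1, i.e. R - T_R is a right inverse of A. -/
/-- Woodbury/Schur identity in a division ring. -/
lemma hua_aux {D : Type*} [DivisionRing D] (a b c d : D) (ha : a ≠ 0) (hd : d ≠ 0)
    (hP : a - b * d⁻¹ * c ≠ 0) (hS : d - c * a⁻¹ * b ≠ 0) :
    (a - b * d⁻¹ * c)⁻¹ = a⁻¹ + a⁻¹ * (b * ((d - c * a⁻¹ * b)⁻¹ * (c * a⁻¹))) := by
  apply inv_eq_of_mul_eq_one_right
  set S := d - c * a⁻¹ * b with hSdef
  have hca : c * a⁻¹ * b = d - S := by rw [hSdef, sub_sub_cancel]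
  calc (a - b * d⁻¹ * c) * (a⁻¹ + a⁻¹ * (b * (S⁻¹ * (c * a⁻¹))))
      = a * a⁻¹ + (a * a⁻¹) * (b * (S⁻¹ * (c * a⁻¹))) - b * d⁻¹ * (c * a⁻¹)
        - b * d⁻¹ * ((c * a⁻¹ * b) * (S⁻¹ * (c * a⁻¹))) := by noncomm_ring
    _ = 1 + b * (S⁻¹ * (c * a⁻¹)) - b * d⁻¹ * (c * a⁻¹)
        - b * d⁻¹ * ((d - S) * (S⁻¹ * (c * a⁻¹))) := by
          rw [mul_inv_cancel₀ ha, hca]; noncomm_ring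
    _ = 1 + b * (S⁻¹ * (c * a⁻¹)) - b * d⁻¹ * (c * a⁻¹)
        - (b * ((d⁻¹ * d) * (S⁻¹ * (c * a⁻¹))) - b * d⁻¹ * ((S * S⁻¹) * (c * a⁻¹))) := by
          noncomm_ring
    _ = 1 := by rw [inv_mul_cancel₀ hd, mul_inv_cancel₀ hS]; noncomm_ring

/-- `R - T_R` is a right inverse of `A`. -/
theorem right_inverse_via_decomposition {D : Type*} [DivisionRing D] (a b c d Δ : D)
    (ha : a ≠ 0) (hb : b ≠ 0) (hc : c ≠ 0) (hd : d ≠ 0)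
    (hΔdef : Δ = a * d - c * b) (hΔ : Δ ≠ 0)
    (h1 : a - b * d⁻¹ * c ≠ 0) (h2 : c - d * b⁻¹ * a ≠ 0)
    (h3 : b - a * c⁻¹ * d ≠ 0) (h4 : d - c * a⁻¹ * b ≠ 0)
    (A R TR : Matrix (Fin 2) (Fin 2) D)
    (hA : A = !![a, b; c, d])
    (hR : R = !![d * Δ⁻¹, -(b * Δ⁻¹); -(c * Δ⁻¹), a * Δ⁻¹])
    (hTR : TR = !![(d - (a - b * d⁻¹ * c)⁻¹ * Δ) * Δ⁻¹,
                   (-b - (c - d * b⁻¹ * a)⁻¹ * Δ) * Δ⁻¹;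
                   (-c - (b - a * c⁻¹ * d)⁻¹ * Δ) * Δ⁻¹,
                   (a - (d - c * a⁻¹ * b)⁻¹ * Δ) * Δ⁻¹]) :
    A * (R - TR) = 1 := by
  -- abbreviations
  set P := a - b * d⁻¹ * c with hPdef
  set S := d - c * a⁻¹ * b with hSdef
  -- the Schur-complement identities
  have hP' : P⁻¹ = a⁻¹ + a⁻¹ * (b * (S⁻¹ * (c * a⁻¹))) := hua_aux a b c d ha hd h1 h4
  have hS' : S⁻¹ = d⁻¹ + d⁻¹ * (c * (P⁻¹ * (b * d⁻¹))) := hua_aux d c b a hd ha h4 h1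
  -- off-diagonal Schur complements as products
  have hQ : c - d * b⁻¹ * a = -(d * b⁻¹ * P) := by
    rw [hPdef]
    have : d * b⁻¹ * (a - b * d⁻¹ * c) = d * b⁻¹ * a - d * (b⁻¹ * b) * (d⁻¹ * c) := by
      noncomm_ring
    rw [this, inv_mul_cancel₀ hb, mul_one, ← mul_assoc, mul_inv_cancel₀ hd, one_mul, neg_sub]
  have hW : b - a * c⁻¹ * d = -(a * c⁻¹ * S) := by
    rw [hSdef]
    have : a * c⁻¹ * (d - c * a⁻¹ * b) = a * c⁻¹ * d - a * (c⁻¹ * c) * (a⁻¹ * b) := by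
      noncomm_ring
    rw [this, inv_mul_cancel₀ hc, mul_one, ← mul_assoc, mul_inv_cancel₀ ha, one_mul, neg_sub]
  have hQinv : (c - d * b⁻¹ * a)⁻¹ = -(P⁻¹ * (b * d⁻¹)) := by
    rw [hQ, inv_neg, mul_inv_rev, mul_inv_rev, inv_inv]
  have hWinv : (b - a * c⁻¹ * d)⁻¹ = -(S⁻¹ * (c * a⁻¹)) := by
    rw [hW, inv_neg, mul_inv_rev, mul_inv_rev, inv_inv]
  have hbdc : b * d⁻¹ * c = a - P := by rw [hPdef, sub_sub_cancel]
  -- the four scalar identities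
  have e00 : a * P⁻¹ + b * (b - a * c⁻¹ * d)⁻¹ = 1 := by
    rw [hWinv, hP']
    have : a * (a⁻¹ + a⁻¹ * (b * (S⁻¹ * (c * a⁻¹)))) + b * -(S⁻¹ * (c * a⁻¹))
        = a * a⁻¹ + (a * a⁻¹) * (b * (S⁻¹ * (c * a⁻¹))) - b * (S⁻¹ * (c * a⁻¹)) := by
      noncomm_ring
    rw [this, mul_inv_cancel₀ ha]; noncomm_ring
  have e01 : a * (c - d * b⁻¹ * a)⁻¹ + b * S⁻¹ = 0 := by
    rw [hQinv, hS']
    have : a * -(P⁻¹ * (b * d⁻¹)) + b * (d⁻¹ + d⁻¹ * (c * (P⁻¹ * (b * d⁻¹))))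
        = -((a - b * d⁻¹ * c) * P⁻¹ * (b * d⁻¹)) + b * d⁻¹ := by noncomm_ring
    rw [this, ← hPdef, mul_inv_cancel₀ h1]; noncomm_ring
  have e10 : c * P⁻¹ + d * (b - a * c⁻¹ * d)⁻¹ = 0 := by
    rw [hWinv, hS']
    have : c * P⁻¹ + d * -((d⁻¹ + d⁻¹ * (c * (P⁻¹ * (b * d⁻¹)))) * (c * a⁻¹))
        = c * P⁻¹ - (d * d⁻¹) * (c * a⁻¹) - (d * d⁻¹) * (c * (P⁻¹ * ((b * d⁻¹ * c) * a⁻¹))) := by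
      noncomm_ring
    rw [this, mul_inv_cancel₀ hd, hbdc]
    have : c * P⁻¹ - 1 * (c * a⁻¹) - 1 * (c * (P⁻¹ * ((a - P) * a⁻¹)))
        = c * P⁻¹ - c * a⁻¹ - c * (P⁻¹ * (a * a⁻¹)) + c * ((P⁻¹ * P) * a⁻¹) := by
      noncomm_ring
    rw [this, mul_inv_cancel₀ ha, inv_mul_cancel₀ h1]; noncomm_ring
  have e11 : c * (c - d * b⁻¹ * a)⁻¹ + d * S⁻¹ = 1 := by
    rw [hQinv, hS']
    have : c * -(P⁻¹ * (b * d⁻¹)) + d * (d⁻¹ + d⁻¹ * (c * (P⁻¹ * (b * d⁻¹))))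
        = -(c * (P⁻¹ * (b * d⁻¹))) + d * d⁻¹ + (d * d⁻¹) * (c * (P⁻¹ * (b * d⁻¹))) := by
      noncomm_ring
    rw [this, mul_inv_cancel₀ hd]; noncomm_ring
  -- entries of R - TR
  have hM : R - TR = !![P⁻¹, (c - d * b⁻¹ * a)⁻¹; (b - a * c⁻¹ * d)⁻¹, S⁻¹] := by
    rw [hR, hTR]
    ext i j
    fin_cases i <;> fin_cases j <;>
      simp [Matrix.sub_apply, sub_mul, neg_mul, mul_assoc, mul_inv_cancel₀ hΔ]
  rw [hA, hM, Matrix.mul_fin_two]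
  ext i j
  fin_cases i <;> fin_cases j <;>
    simp [Matrix.one_apply, e00, e01, e10, e11]
end

section
/- Let D be a division ring, a, b, c, d : D all nonzero, Δ = a*d - c*b ≠ 0, and suppose a - b*d⁻¹*c, c - d*b⁻¹*a, d*b⁻¹*a - c, a*c⁻¹*d - b and d - c*a⁻¹*b are all nonzero. Let L be the 2×2 matrix with rows (Δ⁻¹*d, -Δ⁻¹*b) and (-Δ⁻¹*c, Δ⁻¹*a), and let T_L be the 2×2 matrix with rows (Δ⁻¹*(d - Δ*(a - b*d⁻¹*c)⁻¹), -Δ⁻¹*(b + Δ*(c - d*b⁻¹*a)⁻¹)) and (Δ⁻¹*⁅a,c⁆*(a - b*d⁻¹*c)⁻¹, Δ⁻¹*⁅a,c⁆*(c - d*b⁻¹*a)⁻¹). Then L - T_L equals the Gel'fand quasideterminant inverse G, the 2×2 matrix with rows ((a - b*d⁻¹*c)⁻¹, -(d*b⁻¹*a - c)⁻¹) and (-(a*c⁻¹*d - b)⁻¹, (d - c*a⁻¹*b)⁻¹). -/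
lemma aux3_gelfand {D : Type*} [DivisionRing D] (a b c d Δ : D) (hc : c ≠ 0) (hd : d ≠ 0)
    (hΔdef : Δ = a * d - c * b) (hΔ : Δ ≠ 0) (h1 : a - b * d⁻¹ * c ≠ 0) :
    Δ⁻¹ * c + Δ⁻¹ * (a * c - c * a) * (a - b * d⁻¹ * c)⁻¹ = (a * c⁻¹ * d - b)⁻¹ := by
  set e := a - b * d⁻¹ * c with he
  have key : c * e + (a * c - c * a) = Δ * (d⁻¹ * c) := by
    rw [hΔdef, he]
    simp only [mul_sub, sub_mul, mul_assoc, mul_inv_cancel_left₀ hd]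
    abel
  have hX : Δ⁻¹ * c + Δ⁻¹ * (a * c - c * a) * e⁻¹ = d⁻¹ * c * e⁻¹ := by
    have h : Δ⁻¹ * c = Δ⁻¹ * (c * e) * e⁻¹ := by
      rw [mul_assoc Δ⁻¹ (c*e) e⁻¹, mul_assoc c e e⁻¹, mul_inv_cancel₀ h1, mul_one]
    rw [h, ← mul_assoc, ← add_mul, mul_assoc, ← mul_add, key, ← mul_assoc,
      inv_mul_cancel₀ hΔ, one_mul, mul_assoc]
  rw [hX]
  symm
  apply inv_eq_of_mul_eq_one_right
  have h2 : (a * c⁻¹ * d - b) * (d⁻¹ * c) = e := by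
    rw [he]
    simp [sub_mul, mul_assoc, mul_inv_cancel_left₀ hd, inv_mul_cancel₀ hc]
  rw [← mul_assoc, h2, mul_inv_cancel₀ h1]

lemma aux4_gelfand {D : Type*} [DivisionRing D] (a b c d Δ : D) (ha : a ≠ 0) (hb : b ≠ 0)
    (hΔdef : Δ = a * d - c * b) (hΔ : Δ ≠ 0) (h2 : c - d * b⁻¹ * a ≠ 0) :
    Δ⁻¹ * a - Δ⁻¹ * (a * c - c * a) * (c - d * b⁻¹ * a)⁻¹ = (d - c * a⁻¹ * b)⁻¹ := by
  set f := c - d * b⁻¹ * a with hf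
  have key : a * f - (a * c - c * a) = -Δ * (b⁻¹ * a) := by
    rw [hΔdef, hf]
    simp only [mul_sub, sub_mul, neg_sub, mul_assoc, mul_inv_cancel_left₀ hb]
    abel
  have hX : Δ⁻¹ * a - Δ⁻¹ * (a * c - c * a) * f⁻¹ = -(b⁻¹ * a) * f⁻¹ := by
    have h : Δ⁻¹ * a = Δ⁻¹ * (a * f) * f⁻¹ := by
      rw [mul_assoc Δ⁻¹ (a*f) f⁻¹, mul_assoc a f f⁻¹, mul_inv_cancel₀ h2, mul_one]
    rw [h, ← mul_assoc, ← sub_mul, mul_assoc, ← mul_sub, key, ← mul_assoc,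
      mul_neg, inv_mul_cancel₀ hΔ, neg_mul, one_mul, neg_mul]
  rw [hX]
  symm
  apply inv_eq_of_mul_eq_one_right
  have h3 : (d - c * a⁻¹ * b) * (b⁻¹ * a) = -f := by
    rw [hf]
    simp [sub_mul, mul_assoc, mul_inv_cancel_left₀ hb, inv_mul_cancel₀ ha, neg_sub]
  rw [neg_mul, mul_neg, ← mul_assoc, h3, neg_mul, neg_neg, mul_inv_cancel₀ h2]

/-- `L - T_L` equals the Gel'fand quasideterminant inverse `G`.
Here `⁅x,y⁆ = x*y - y*x` is written explicitly. -/
theorem left_inverse_eq_gelfand {D : Type*} [DivisionRing D] (a b c d Δ : D)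
    (ha : a ≠ 0) (hb : b ≠ 0) (hc : c ≠ 0) (hd : d ≠ 0)
    (hΔdef : Δ = a * d - c * b) (hΔ : Δ ≠ 0)
    (h1 : a - b * d⁻¹ * c ≠ 0) (h2 : c - d * b⁻¹ * a ≠ 0)
    (h3 : d * b⁻¹ * a - c ≠ 0) (h4 : a * c⁻¹ * d - b ≠ 0)
    (h5 : d - c * a⁻¹ * b ≠ 0)
    (L TL G : Matrix (Fin 2) (Fin 2) D)
    (hL : L = !![Δ⁻¹ * d, -(Δ⁻¹ * b); -(Δ⁻¹ * c), Δ⁻¹ * a])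
    (hTL : TL = !![Δ⁻¹ * (d - Δ * (a - b * d⁻¹ * c)⁻¹),
                   -(Δ⁻¹ * (b + Δ * (c - d * b⁻¹ * a)⁻¹));
                   Δ⁻¹ * (a * c - c * a) * (a - b * d⁻¹ * c)⁻¹,
                   Δ⁻¹ * (a * c - c * a) * (c - d * b⁻¹ * a)⁻¹])
    (hG : G = !![(a - b * d⁻¹ * c)⁻¹, -(d * b⁻¹ * a - c)⁻¹;
                 -(a * c⁻¹ * d - b)⁻¹, (d - c * a⁻¹ * b)⁻¹]) :
    L - TL = G := by
  subst hL hTL hG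
  ext i j
  fin_cases i <;> fin_cases j <;>
    simp only [Matrix.sub_apply, Matrix.cons_val', Matrix.cons_val_zero, Matrix.cons_val_one,
      Matrix.head_cons, Matrix.empty_val', Matrix.cons_val_fin_one, Matrix.head_fin_const,
      Fin.isValue, Fin.zero_eta, Fin.mk_one, Matrix.of_apply]
  · rw [mul_sub, sub_sub_cancel, ← mul_assoc, inv_mul_cancel₀ hΔ, one_mul]
  · rw [← inv_neg, neg_sub, neg_sub_neg, mul_add, add_sub_cancel_left, ← mul_assoc,
      inv_mul_cancel₀ hΔ, one_mul]
  · rw [sub_eq_add_neg, ← neg_add, aux3_gelfand a b c d Δ hc hd hΔdef hΔ h1]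
  · exact aux4_gelfand a b c d Δ ha hb hΔdef hΔ h2
end

section
/- Let D be a division ring and a, b, c, d : D all nonzero with a - b*d⁻¹*c, d*b⁻¹*a - c, a*c⁻¹*d - b and d - c*a⁻¹*b all nonzero. Let A be the 2×2 matrix with rows (a, b) and (c, d) and let G be the 2×2 matrix with rows ((a - b*d⁻¹*c)⁻¹, -(d*b⁻¹*a - c)⁻¹) and (-(a*c⁻¹*d - b)⁻¹, (d - c*a⁻¹*b)⁻¹). Then G*A = 1, i.e. the Gel'fand quasideterminant inverse is a left inverse of A. -/
/-- The Gel'fand quasideterminant inverse is a left inverse of `A`. -/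
theorem gelfand_left_inverse {D : Type*} [DivisionRing D] (a b c d : D)
    (ha : a ≠ 0) (hb : b ≠ 0) (hc : c ≠ 0) (hd : d ≠ 0)
    (h1 : a - b * d⁻¹ * c ≠ 0) (h2 : d * b⁻¹ * a - c ≠ 0)
    (h3 : a * c⁻¹ * d - b ≠ 0) (h4 : d - c * a⁻¹ * b ≠ 0)
    (A G : Matrix (Fin 2) (Fin 2) D)
    (hA : A = !![a, b; c, d])
    (hG : G = !![(a - b * d⁻¹ * c)⁻¹, -(d * b⁻¹ * a - c)⁻¹;
                 -(a * c⁻¹ * d - b)⁻¹, (d - c * a⁻¹ * b)⁻¹]) :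
    G * A = 1 := by
  have e2fac : d * b⁻¹ * (a - b * d⁻¹ * c) = d * b⁻¹ * a - c := by
    rw [mul_sub]
    congr 1
    rw [mul_assoc, mul_assoc, inv_mul_cancel_left₀ hb, ← mul_assoc,
      mul_inv_cancel₀ hd, one_mul]
  have e3fac : a * c⁻¹ * (d - c * a⁻¹ * b) = a * c⁻¹ * d - b := by
    rw [mul_sub]
    congr 1
    rw [mul_assoc, mul_assoc, inv_mul_cancel_left₀ hc, ← mul_assoc,
      mul_inv_cancel₀ ha, one_mul]
  have e2 : (d * b⁻¹ * a - c)⁻¹ = (a - b * d⁻¹ * c)⁻¹ * (b * d⁻¹) := by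
    rw [← e2fac, mul_inv_rev, mul_inv_rev, inv_inv]
  have e3 : (a * c⁻¹ * d - b)⁻¹ = (d - c * a⁻¹ * b)⁻¹ * (c * a⁻¹) := by
    rw [← e3fac, mul_inv_rev, mul_inv_rev, inv_inv]
  subst hA hG
  ext i j
  fin_cases i <;> fin_cases j <;>
    simp [Matrix.mul_apply, Fin.sum_univ_two, e2, e3, Matrix.one_apply]
  · rw [← sub_eq_add_neg, mul_assoc (a - b * d⁻¹ * c)⁻¹ (b * d⁻¹) c, ← mul_sub,
      inv_mul_cancel₀ h1]
  · rw [mul_assoc (a - b * d⁻¹ * c)⁻¹, mul_assoc b d⁻¹ d, inv_mul_cancel₀ hd,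
      mul_one, add_neg_cancel]
  · rw [mul_assoc (d - c * a⁻¹ * b)⁻¹, mul_assoc c a⁻¹ a, inv_mul_cancel₀ ha,
      mul_one, neg_add_cancel]
  · rw [add_comm, ← sub_eq_add_neg, mul_assoc (d - c * a⁻¹ * b)⁻¹ (c * a⁻¹) b,
      ← mul_sub, inv_mul_cancel₀ h4]
end

section
/- Let D be a division ring and a, b, c, d : D all nonzero with a - b*d⁻¹*c, d*b⁻¹*a - c, a*c⁻¹*d - b and d - c*a⁻¹*b all nonzero. Let A be the 2×2 matrix with rows (a, b) and (c, d) and let G be the 2×2 matrix with rows ((a - b*d⁻¹*c)⁻¹, -(d*b⁻¹*a - c)⁻¹) and (-(a*c⁻¹*d - b)⁻¹, (d - c*a⁻¹*b)⁻¹). Then A*G = 1, i.e. the Gel'fand quasideterminant inverse is a right inverse of A. -/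
/-- The Gel'fand quasideterminant inverse is a right inverse of `A`. -/
theorem gelfand_right_inverse {D : Type*} [DivisionRing D] (a b c d : D)
    (ha : a ≠ 0) (hb : b ≠ 0) (hc : c ≠ 0) (hd : d ≠ 0)
    (h1 : a - b * d⁻¹ * c ≠ 0) (h2 : d * b⁻¹ * a - c ≠ 0)
    (h3 : a * c⁻¹ * d - b ≠ 0) (h4 : d - c * a⁻¹ * b ≠ 0)
    (A G : Matrix (Fin 2) (Fin 2) D)
    (hA : A = !![a, b; c, d])
    (hG : G = !![(a - b * d⁻¹ * c)⁻¹, -(d * b⁻¹ * a - c)⁻¹;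
                 -(a * c⁻¹ * d - b)⁻¹, (d - c * a⁻¹ * b)⁻¹]) :
    A * G = 1 := by
  have f3 : a * c⁻¹ * d - b = (a - b * d⁻¹ * c) * (c⁻¹ * d) := by
    rw [sub_mul]
    congr 1
    · rw [mul_assoc]
    · rw [mul_assoc, mul_assoc, ← mul_assoc c c⁻¹, mul_inv_cancel₀ hc, one_mul,
        inv_mul_cancel₀ hd, mul_one]
  have f2 : d * b⁻¹ * a - c = (d - c * a⁻¹ * b) * (b⁻¹ * a) := by
    rw [sub_mul]
    congr 1
    · rw [mul_assoc]
    · rw [mul_assoc, mul_assoc, ← mul_assoc b b⁻¹, mul_inv_cancel₀ hb, one_mul,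
        inv_mul_cancel₀ ha, mul_one]
  have e3 : (a * c⁻¹ * d - b)⁻¹ = d⁻¹ * c * (a - b * d⁻¹ * c)⁻¹ := by
    rw [f3, mul_inv_rev, mul_inv_rev, inv_inv]
  have e2 : (d * b⁻¹ * a - c)⁻¹ = a⁻¹ * b * (d - c * a⁻¹ * b)⁻¹ := by
    rw [f2, mul_inv_rev, mul_inv_rev, inv_inv]
  subst hA hG
  ext i j
  fin_cases i <;> fin_cases j <;>
    simp only [Matrix.mul_apply, Fin.sum_univ_two, Matrix.cons_val', Matrix.cons_val_zero,
      Matrix.cons_val_one, Matrix.head_cons, Matrix.head_fin_const, Matrix.empty_val',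
      Matrix.cons_val_fin_one, Matrix.one_apply, Fin.mk.injEq, Matrix.one_apply_eq,
      Matrix.one_apply_ne, Matrix.cons_val', Matrix.head_cons, ne_eq, Fin.isValue]
  · show a * (a - b * d⁻¹ * c)⁻¹ + b * -(a * c⁻¹ * d - b)⁻¹ =
      (1 : Matrix (Fin 2) (Fin 2) D) ⟨0, by omega⟩ ⟨0, by omega⟩
    rw [Matrix.one_apply_eq, e3, mul_neg, ← sub_eq_add_neg, ← mul_assoc, ← mul_assoc,
      ← sub_mul, mul_inv_cancel₀ h1]
  · show a * -(d * b⁻¹ * a - c)⁻¹ + b * (d - c * a⁻¹ * b)⁻¹ =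
      (1 : Matrix (Fin 2) (Fin 2) D) ⟨0, by omega⟩ ⟨1, by omega⟩
    rw [Matrix.one_apply_ne (by decide), e2, mul_neg, ← mul_assoc, ← mul_assoc,
      mul_inv_cancel₀ ha, one_mul, neg_add_cancel]
  · show c * (a - b * d⁻¹ * c)⁻¹ + d * -(a * c⁻¹ * d - b)⁻¹ =
      (1 : Matrix (Fin 2) (Fin 2) D) ⟨1, by omega⟩ ⟨0, by omega⟩
    rw [Matrix.one_apply_ne (by decide), e3, mul_neg, ← mul_assoc, ← mul_assoc,
      mul_inv_cancel₀ hd, one_mul, add_neg_cancel]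
  · show c * -(d * b⁻¹ * a - c)⁻¹ + d * (d - c * a⁻¹ * b)⁻¹ =
      (1 : Matrix (Fin 2) (Fin 2) D) ⟨1, by omega⟩ ⟨1, by omega⟩
    rw [Matrix.one_apply_eq, e2, mul_neg, ← mul_assoc, ← mul_assoc, ← neg_mul,
      ← add_mul, neg_add_eq_sub, mul_inv_cancel₀ h4]
end

section
/- Let D be a division ring, a, b, c, d : D all nonzero, Δ' = a*d - b*c ≠ 0, and suppose d*b⁻¹*a - c, d - c*a⁻¹*b and c*a⁻¹*b - d are all nonzero. Let A be the 2×2 matrix with rows (a, b) and (c, d), let R' be the 2×2 matrix with rows (d*Δ'⁻¹, -b*Δ'⁻¹) and (-c*Δ'⁻¹, a*Δ'⁻¹), and let T'_R be the 2×2 matrix with rows ((d*b⁻¹*a - c)⁻¹*⁅d,c⁆*Δ'⁻¹, (d*b⁻¹*a - c)⁻¹*(⁅a,d⁆ + ⁅c,b⁆ + d*b⁻¹*⁅b,a⁆)*Δ'⁻¹) and ((d - c*a⁻¹*b)⁻¹*⁅c,d⁆*Δ'⁻¹, (c*a⁻¹*b - d)⁻¹*(⁅a,d⁆ + ⁅c,b⁆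 + c*a⁻¹*⁅b,a⁆)*Δ'⁻¹). Then A*T'_R = A*R' - 1, i.e. T'_R is a right decomposition of the right residue with respect to the ordering Δ'. -/
/-- `T'_R` is a right decomposition of the right residue with respect to the
ordering `Δ' = a*d - b*c`. Here `⁅x,y⁆ = x*y - y*x` is written explicitly. -/
theorem right_decomposition_other_ordering {D : Type*} [DivisionRing D]
    (a b c d Δ' : D)
    (ha : a ≠ 0) (hb : b ≠ 0) (hc : c ≠ 0) (hd : d ≠ 0)
    (hΔ'def : Δ' = a * d - b * c) (hΔ' : Δ' ≠ 0)
    (h1 : d * b⁻¹ * a - c ≠ 0) (h2 : d - c * a⁻¹ * b ≠ 0) (h3 : c * a⁻¹ * b - d ≠ 0)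
    (A R' TR' : Matrix (Fin 2) (Fin 2) D)
    (hA : A = !![a, b; c, d])
    (hR' : R' = !![d * Δ'⁻¹, -(b * Δ'⁻¹); -(c * Δ'⁻¹), a * Δ'⁻¹])
    (hTR' : TR' =
      !![(d * b⁻¹ * a - c)⁻¹ * (d * c - c * d) * Δ'⁻¹,
         (d * b⁻¹ * a - c)⁻¹ *
           ((a * d - d * a) + (c * b - b * c) + d * b⁻¹ * (b * a - a * b)) * Δ'⁻¹;
         (d - c * a⁻¹ * b)⁻¹ * (c * d - d * c) * Δ'⁻¹,
         (c * a⁻¹ * b - d)⁻¹ *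
           ((a * d - d * a) + (c * b - b * c) + c * a⁻¹ * (b * a - a * b)) * Δ'⁻¹]) :
    A * TR' = A * R' - 1 := by
  set g := d * b⁻¹ - c * a⁻¹ with hgdef
  have hfb : d - c * a⁻¹ * b = g * b := by
    rw [hgdef, sub_mul, mul_assoc d b⁻¹ b, inv_mul_cancel₀ hb, mul_one]
  have hea : d * b⁻¹ * a - c = g * a := by
    rw [hgdef, sub_mul, mul_assoc c a⁻¹ a, inv_mul_cancel₀ ha, mul_one]
  have hg : g ≠ 0 := by
    intro h
    exact h2 (by rw [hfb, h, zero_mul])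
  have hcb : c * a⁻¹ * b - d = -(g * b) := by rw [← hfb, neg_sub]
  have hinv1 : (d * b⁻¹ * a - c)⁻¹ = a⁻¹ * g⁻¹ := by rw [hea, mul_inv_rev]
  have hinv2 : (d - c * a⁻¹ * b)⁻¹ = b⁻¹ * g⁻¹ := by rw [hfb, mul_inv_rev]
  have hinv3 : (c * a⁻¹ * b - d)⁻¹ = -(b⁻¹ * g⁻¹) := by
    rw [hcb, inv_neg, mul_inv_rev]
  have hΔc : Δ' * Δ'⁻¹ = 1 := mul_inv_cancel₀ hΔ'
  have hac : a * a⁻¹ = 1 := mul_inv_cancel₀ ha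
  have hbc : b * b⁻¹ = 1 := mul_inv_cancel₀ hb
  have hgc : g * g⁻¹ = 1 := mul_inv_cancel₀ hg
  have hgc' : g⁻¹ * g = 1 := inv_mul_cancel₀ hg
  have F1 : c * a⁻¹ * g⁻¹ = d * b⁻¹ * g⁻¹ - 1 := by
    have h : c * a⁻¹ = d * b⁻¹ - g := by rw [hgdef]; noncomm_ring
    rw [h, sub_mul, hgc]
  have hKdiff : (a * d - d * a + (c * b - b * c) + d * b⁻¹ * (b * a - a * b))
      - (a * d - d * a + (c * b - b * c) + c * a⁻¹ * (b * a - a * b))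
      = g * (b * a - a * b) := by rw [hgdef]; noncomm_ring
  have comb : ∀ u : D,
      u * g⁻¹ * (a * d - d * a + (c * b - b * c) + d * b⁻¹ * (b * a - a * b)) * Δ'⁻¹
      - u * g⁻¹ * (a * d - d * a + (c * b - b * c) + c * a⁻¹ * (b * a - a * b)) * Δ'⁻¹
      = u * (b * a - a * b) * Δ'⁻¹ := by
    intro u
    calc u * g⁻¹ * (a * d - d * a + (c * b - b * c) + d * b⁻¹ * (b * a - a * b)) * Δ'⁻¹
        - u * g⁻¹ * (a * d - d * a + (c * b - b * c) + c * a⁻¹ * (b * a - a * b)) * Δ'⁻¹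
        = u * (g⁻¹ * ((a * d - d * a + (c * b - b * c) + d * b⁻¹ * (b * a - a * b))
            - (a * d - d * a + (c * b - b * c) + c * a⁻¹ * (b * a - a * b)))) * Δ'⁻¹ := by
          noncomm_ring
      _ = u * (g⁻¹ * (g * (b * a - a * b))) * Δ'⁻¹ := by rw [hKdiff]
      _ = u * (b * a - a * b) * Δ'⁻¹ := by rw [← mul_assoc g⁻¹ g, hgc', one_mul]
  subst hA hR' hTR'
  ext i j
  fin_cases i <;> fin_cases j <;>
    simp [Matrix.mul_apply, Fin.sum_univ_succ, hinv1, hinv2, hinv3] <;>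
    simp only [← mul_assoc]
  · -- (0,0)
    simp only [hac, hbc, one_mul]
    rw [show (1:D) = Δ' * Δ'⁻¹ from hΔc.symm, hΔ'def]
    noncomm_ring
  · -- (0,1)
    have c1 := comb 1
    simp only [one_mul] at c1
    rw [← sub_eq_add_neg]
    simp only [hac, hbc, one_mul]
    rw [c1]
    noncomm_ring
  · -- (1,0)
    rw [F1]
    noncomm_ring
  · -- (1,1)
    have expand : c * a⁻¹ * g⁻¹ *
          (a * d - d * a + (c * b - b * c) + d * b⁻¹ * (b * a - a * b)) * Δ'⁻¹
        + -(d * b⁻¹ * g⁻¹ *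
          (a * d - d * a + (c * b - b * c) + c * a⁻¹ * (b * a - a * b)) * Δ'⁻¹)
        = (d * b⁻¹ * g⁻¹ *
            (a * d - d * a + (c * b - b * c) + d * b⁻¹ * (b * a - a * b)) * Δ'⁻¹
          - d * b⁻¹ * g⁻¹ *
            (a * d - d * a + (c * b - b * c) + c * a⁻¹ * (b * a - a * b)) * Δ'⁻¹)
        - (a * d - d * a + (c * b - b * c) + d * b⁻¹ * (b * a - a * b)) * Δ'⁻¹ := by
      rw [F1]; noncomm_ring
    rw [expand, comb (d * b⁻¹), show (1:D) = Δ' * Δ'⁻¹ from hΔc.symm, hΔ'def]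
    noncomm_ring
end

section
/- Let D be a division ring, a, b, c, d : D all nonzero, Δ' = a*d - b*c ≠ 0, and suppose a - b*d⁻¹*c, d*b⁻¹*a - c, a*c⁻¹*d - b, d - c*a⁻¹*b and c*a⁻¹*b - d are all nonzero. Let R' be the 2×2 matrix with rows (d*Δ'⁻¹, -b*Δ'⁻¹) and (-c*Δ'⁻¹, a*Δ'⁻¹), and let T'_R be the 2×2 matrix with rows ((d*b⁻¹*a - c)⁻¹*⁅d,c⁆*Δ'⁻¹, (d*b⁻¹*a - c)⁻¹*(⁅a,d⁆ + ⁅c,b⁆ + d*b⁻¹*⁅b,a⁆)*Δ'⁻¹) and ((d - c*a⁻¹*b)⁻¹*⁅c,d⁆*Δ'⁻¹, (c*a⁻¹*b - d)⁻¹*(⁅a,d⁆ + ⁅c,b⁆ + c*a⁻¹*⁅b,a⁆)*Δ'⁻¹). Then R' - T'_R equals the Gel'fand quasideterminant inverse G, the 2×2 matrix with rows ((a - b*d⁻¹*c)⁻¹, -(d*b⁻¹*a - c)⁻¹) and (-(a*c⁻¹*d - b)⁻¹, (d - c*a⁻¹*b)⁻¹); in particular the right inverse obtained from the ordering Δ'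 coincides with the one obtained from the ordering Δ = a*d - c*b. -/
private lemma key_aux {D : Type*} [DivisionRing D] (x p q r Δ : D) (hx : x ≠ 0) (hΔ : Δ ≠ 0)
    (h : x * p - q = r * Δ) :
    p * Δ⁻¹ - x⁻¹ * q * Δ⁻¹ = x⁻¹ * r := by
  have h2 : p * Δ⁻¹ - x⁻¹ * q * Δ⁻¹ = x⁻¹ * (x * p - q) * Δ⁻¹ := by
    rw [mul_sub, ← mul_assoc, inv_mul_cancel₀ hx, one_mul, sub_mul, mul_assoc]
  rw [h2, h, ← mul_assoc, mul_assoc (x⁻¹ * r), mul_inv_cancel₀ hΔ, mul_one]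

/-- `R' - T'_R` equals the Gel'fand quasideterminant inverse `G`: the right inverse
obtained from the ordering `Δ' = a*d - b*c` coincides with the one from `Δ = a*d - c*b`.
Here `⁅x,y⁆ = x*y - y*x` is written explicitly. -/
theorem right_inverse_other_ordering_eq_gelfand {D : Type*} [DivisionRing D]
    (a b c d Δ' : D)
    (ha : a ≠ 0) (hb : b ≠ 0) (hc : c ≠ 0) (hd : d ≠ 0)
    (hΔ'def : Δ' = a * d - b * c) (hΔ' : Δ' ≠ 0)
    (h1 : a - b * d⁻¹ * c ≠ 0) (h2 : d * b⁻¹ * a - c ≠ 0)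
    (h3 : a * c⁻¹ * d - b ≠ 0) (h4 : d - c * a⁻¹ * b ≠ 0) (h5 : c * a⁻¹ * b - d ≠ 0)
    (R' TR' G : Matrix (Fin 2) (Fin 2) D)
    (hR' : R' = !![d * Δ'⁻¹, -(b * Δ'⁻¹); -(c * Δ'⁻¹), a * Δ'⁻¹])
    (hTR' : TR' =
      !![(d * b⁻¹ * a - c)⁻¹ * (d * c - c * d) * Δ'⁻¹,
         (d * b⁻¹ * a - c)⁻¹ *
           ((a * d - d * a) + (c * b - b * c) + d * b⁻¹ * (b * a - a * b)) * Δ'⁻¹;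
         (d - c * a⁻¹ * b)⁻¹ * (c * d - d * c) * Δ'⁻¹,
         (c * a⁻¹ * b - d)⁻¹ *
           ((a * d - d * a) + (c * b - b * c) + c * a⁻¹ * (b * a - a * b)) * Δ'⁻¹])
    (hG : G = !![(a - b * d⁻¹ * c)⁻¹, -(d * b⁻¹ * a - c)⁻¹;
                 -(a * c⁻¹ * d - b)⁻¹, (d - c * a⁻¹ * b)⁻¹]) :
    R' - TR' = G := by
  have hbb : b⁻¹ * b = (1 : D) := inv_mul_cancel₀ hb
  have haa : a⁻¹ * a = (1 : D) := inv_mul_cancel₀ ha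
  have hdd : d⁻¹ * d = (1 : D) := inv_mul_cancel₀ hd
  have hcc : c⁻¹ * c = (1 : D) := inv_mul_cancel₀ hc
  -- entry (0,0)
  have e00 : d * Δ'⁻¹ - (d * b⁻¹ * a - c)⁻¹ * (d * c - c * d) * Δ'⁻¹
      = (a - b * d⁻¹ * c)⁻¹ := by
    have hfac : a - b * d⁻¹ * c = b * d⁻¹ * (d * b⁻¹ * a - c) := by
      rw [mul_sub]
      have : b * d⁻¹ * (d * b⁻¹ * a) = a := by
        rw [show b * d⁻¹ * (d * b⁻¹ * a) = b * (d⁻¹ * d) * (b⁻¹ * a) by noncomm_ring,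
          hdd, mul_one, ← mul_assoc, mul_inv_cancel₀ hb, one_mul]
      rw [this]
    have hinv : (a - b * d⁻¹ * c)⁻¹ = (d * b⁻¹ * a - c)⁻¹ * (d * b⁻¹) := by
      rw [hfac, mul_inv_rev, mul_inv_rev, inv_inv, mul_assoc]
    rw [hinv]
    apply key_aux _ _ _ _ _ h2 hΔ'
    rw [hΔ'def, mul_sub]
    have : d * b⁻¹ * (b * c) = d * c := by
      rw [show d * b⁻¹ * (b * c) = d * (b⁻¹ * b) * c by noncomm_ring, hbb, mul_one]
    rw [this]
    noncomm_ring
  -- entry (0,1)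
  have e01 : -(b * Δ'⁻¹) - (d * b⁻¹ * a - c)⁻¹ *
        ((a * d - d * a) + (c * b - b * c) + d * b⁻¹ * (b * a - a * b)) * Δ'⁻¹
      = -(d * b⁻¹ * a - c)⁻¹ := by
    have := key_aux (d * b⁻¹ * a - c) (-b)
      ((a * d - d * a) + (c * b - b * c) + d * b⁻¹ * (b * a - a * b)) (-1) Δ' h2 hΔ' ?_
    · rw [neg_mul] at this
      rw [this, mul_neg, mul_one]
    · rw [hΔ'def]
      have hba : d * b⁻¹ * (b * a) = d * a := by
        rw [show d * b⁻¹ * (b * a) = d * (b⁻¹ * b) * a by noncomm_ring, hbb, mul_one]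
      rw [mul_sub (d * b⁻¹), hba]
      noncomm_ring
  -- entry (1,0)
  have e10 : -(c * Δ'⁻¹) - (d - c * a⁻¹ * b)⁻¹ * (c * d - d * c) * Δ'⁻¹
      = -(a * c⁻¹ * d - b)⁻¹ := by
    have hfac : a * c⁻¹ * d - b = a * c⁻¹ * (d - c * a⁻¹ * b) := by
      rw [mul_sub]
      have : a * c⁻¹ * (c * a⁻¹ * b) = b := by
        rw [show a * c⁻¹ * (c * a⁻¹ * b) = a * (c⁻¹ * c) * (a⁻¹ * b) by noncomm_ring,
          hcc, mul_one, ← mul_assoc, mul_inv_cancel₀ ha, one_mul]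
      rw [this]
    have hinv : (a * c⁻¹ * d - b)⁻¹ = (d - c * a⁻¹ * b)⁻¹ * (c * a⁻¹) := by
      rw [hfac, mul_inv_rev, mul_inv_rev, inv_inv, mul_assoc]
    rw [hinv]
    have := key_aux (d - c * a⁻¹ * b) (-c) (c * d - d * c) (-(c * a⁻¹)) Δ' h4 hΔ' ?_
    · rw [neg_mul] at this
      rw [this, mul_neg, neg_inj, mul_assoc]
    · rw [hΔ'def]
      have had : c * a⁻¹ * (a * d) = c * d := by
        rw [show c * a⁻¹ * (a * d) = c * (a⁻¹ * a) * d by noncomm_ring, haa, mul_one]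
      rw [show -(c * a⁻¹) * (a * d - b * c)
          = -(c * a⁻¹ * (a * d)) + c * a⁻¹ * (b * c) by noncomm_ring, had]
      noncomm_ring
  -- entry (1,1)
  have e11 : a * Δ'⁻¹ - (c * a⁻¹ * b - d)⁻¹ *
        ((a * d - d * a) + (c * b - b * c) + c * a⁻¹ * (b * a - a * b)) * Δ'⁻¹
      = (d - c * a⁻¹ * b)⁻¹ := by
    have := key_aux (c * a⁻¹ * b - d) a
      ((a * d - d * a) + (c * b - b * c) + c * a⁻¹ * (b * a - a * b)) (-1) Δ' h5 hΔ' ?_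
    · rw [this, mul_neg, mul_one,
        show c * a⁻¹ * b - d = -(d - c * a⁻¹ * b) from (neg_sub _ _).symm, inv_neg, neg_neg]
    · rw [hΔ'def]
      have hab : c * a⁻¹ * (a * b) = c * b := by
        rw [show c * a⁻¹ * (a * b) = c * (a⁻¹ * a) * b by noncomm_ring, haa, mul_one]
      rw [mul_sub (c * a⁻¹), hab]
      noncomm_ring
  subst hR' hTR' hG
  ext i j
  fin_cases i <;> fin_cases j <;>
    simp only [Matrix.sub_apply, Matrix.cons_val', Matrix.cons_val_zero, Matrix.cons_val_one,
      Matrix.head_cons, Matrix.head_fin_const, Matrix.empty_val', Matrix.cons_val_fin_one]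
  · exact e00
  · exact e01
  · exact e10
  · exact e11
end

section
/- Let D be a division ring, a, b, c, d : D all nonzero, Δ' = a*d - b*c ≠ 0, and suppose a - b*d⁻¹*c, a*c⁻¹*d - b and d - c*a⁻¹*b are all nonzero. Let A be the 2×2 matrix with rows (a, b) and (c, d), let L' be the 2×2 matrix with rows (Δ'⁻¹*d, -Δ'⁻¹*b) and (-Δ'⁻¹*c, Δ'⁻¹*a), and let T'_L be the 2×2 matrix with rows (Δ'⁻¹*(d - Δ'*(a - b*d⁻¹*c)⁻¹), Δ'⁻¹*(⁅d,b⁆ - ⁅d,a⁆*a⁻¹*b)*(d - c*a⁻¹*b)⁻¹) and (Δ'⁻¹*(-c + Δ'*(a*c⁻¹*d - b)⁻¹), Δ'⁻¹*(⁅b,c⁆ - ⁅a,c⁆*a⁻¹*b)*(d - c*a⁻¹*b)⁻¹). Then T'_L*A = L'*A - 1, i.e. T'_L is a left decomposition of the left residue with respect to the ordering Δ'. -/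
set_option maxHeartbeats 1000000 in
/-- `T'_L` is a left decomposition of the left residue with respect to the
ordering `Δ' = a*d - b*c`. Here `⁅x,y⁆ = x*y - y*x` is written explicitly. -/

theorem left_decomposition_other_ordering {D : Type*} [DivisionRing D]
    (a b c d Δ' : D)
    (ha : a ≠ 0) (hb : b ≠ 0) (hc : c ≠ 0) (hd : d ≠ 0)
    (hΔ'def : Δ' = a * d - b * c) (hΔ' : Δ' ≠ 0)
    (h1 : a - b * d⁻¹ * c ≠ 0) (h2 : a * c⁻¹ * d - b ≠ 0) (h3 : d - c * a⁻¹ * b ≠ 0)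
    (A L' TL' : Matrix (Fin 2) (Fin 2) D)
    (hA : A = !![a, b; c, d])
    (hL' : L' = !![Δ'⁻¹ * d, -(Δ'⁻¹ * b); -(Δ'⁻¹ * c), Δ'⁻¹ * a])
    (hTL' : TL' =
      !![Δ'⁻¹ * (d - Δ' * (a - b * d⁻¹ * c)⁻¹),
         Δ'⁻¹ * ((d * b - b * d) - (d * a - a * d) * a⁻¹ * b) * (d - c * a⁻¹ * b)⁻¹;
         Δ'⁻¹ * (-c + Δ' * (a * c⁻¹ * d - b)⁻¹),
         Δ'⁻¹ * ((b * c - c * b) - (a * c - c * a) * a⁻¹ * b) * (d - c * a⁻¹ * b)⁻¹]) :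
    TL' * A = L' * A - 1 := by
  set w : D := (d - c * a⁻¹ * b)⁻¹ with hwdef
  -- basic relations
  have hcw : ∀ x : D, c * (a⁻¹ * (b * (w * x))) = d * (w * x) - x := by
    intro x
    have h0 : (d - c * a⁻¹ * b) * (w * x) = x := by
      rw [← mul_assoc, mul_inv_cancel₀ h3, one_mul]
    have h2' : d * (w * x) - c * (a⁻¹ * (b * (w * x))) = x := by
      rw [sub_mul] at h0; simpa only [mul_assoc] using h0
    have h2 : d * (w * x) = x + c * (a⁻¹ * (b * (w * x))) := by
      rw [sub_eq_iff_eq_add] at h2'; exact h2'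
    rw [h2]; abel
  have hcw1 : c * (a⁻¹ * (b * w)) = d * w - 1 := by simpa using hcw 1
  have hwc : ∀ x : D, w * (c * (a⁻¹ * (b * x))) = w * (d * x) - x := by
    intro x
    have h0 : w * ((d - c * a⁻¹ * b) * x) = x := by
      rw [← mul_assoc, inv_mul_cancel₀ h3, one_mul]
    have h2' : w * (d * x) - w * (c * (a⁻¹ * (b * x))) = x := by
      rw [sub_mul, mul_sub] at h0; simpa only [mul_assoc] using h0
    have h2 : w * (d * x) = x + w * (c * (a⁻¹ * (b * x))) := by
      rw [sub_eq_iff_eq_add] at h2'; exact h2'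
    rw [h2]; abel
  have hwc1 : w * (c * (a⁻¹ * b)) = w * d - 1 := by simpa using hwc 1
  have had : ∀ x : D, a * (d * x) = Δ' * x + b * (c * x) := by
    intro x; rw [hΔ'def]; noncomm_ring
  have had1 : a * d = Δ' + b * c := by rw [hΔ'def]; abel
  -- closed form for the other two inverses
  have hu : (a - b * d⁻¹ * c)⁻¹ = a⁻¹ + a⁻¹ * (b * (w * (c * a⁻¹))) := by
    apply inv_eq_of_mul_eq_one_right
    simp only [mul_add, add_mul, mul_sub, sub_mul, mul_assoc,
      mul_inv_cancel₀ ha, inv_mul_cancel₀ ha, mul_inv_cancel_left₀ ha,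
      inv_mul_cancel_left₀ ha, inv_mul_cancel_left₀ hd, mul_one, one_mul,
      hcw, hcw1]
    abel
  have hv : (a * c⁻¹ * d - b)⁻¹ = w * (c * a⁻¹) := by
    have hfac : a * c⁻¹ * d - b = a * c⁻¹ * (d - c * a⁻¹ * b) := by
      rw [mul_sub]; congr 1
      simp [mul_assoc, inv_mul_cancel_left₀ hc, mul_inv_cancel_left₀ ha]
    rw [hfac, mul_inv_rev, mul_inv_rev, inv_inv, hwdef, mul_assoc]
  clear_value w
  subst hA hL' hTL'
  ext i j
  fin_cases i <;> fin_cases j <;>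
    simp [Matrix.mul_apply, Fin.sum_univ_two, Matrix.one_apply] <;>
    simp only [hu, hv] <;>
    simp only [mul_add, add_mul, mul_sub, sub_mul, neg_mul, mul_neg, neg_neg, mul_one, one_mul,
      mul_assoc, mul_inv_cancel₀ ha, inv_mul_cancel₀ ha, mul_inv_cancel_left₀ ha,
      inv_mul_cancel_left₀ ha, mul_inv_cancel₀ hΔ', inv_mul_cancel₀ hΔ',
      mul_inv_cancel_left₀ hΔ', inv_mul_cancel_left₀ hΔ',
      hcw, hcw1, hwc, hwc1, had, had1] <;>
    abel
end

section
/- Let D be a division ring, a, b, c, d : D all nonzero, Δ' = a*d - b*c ≠ 0, and suppose a - b*d⁻¹*c, d*b⁻¹*a - c, a*c⁻¹*d - b and d - c*a⁻¹*b are all nonzero. Let L' be the 2×2 matrix with rows (Δ'⁻¹*d, -Δ'⁻¹*b) and (-Δ'⁻¹*c, Δ'⁻¹*a), and let T'_L be the 2×2 matrix with rows (Δ'⁻¹*(d - Δ'*(a - b*d⁻¹*c)⁻¹), Δ'⁻¹*(⁅d,b⁆ - ⁅d,a⁆*a⁻¹*b)*(d - c*a⁻¹*b)⁻¹) and (Δ'⁻¹*(-c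 + Δ'*(a*c⁻¹*d - b)⁻¹), Δ'⁻¹*(⁅b,c⁆ - ⁅a,c⁆*a⁻¹*b)*(d - c*a⁻¹*b)⁻¹). Then L' - T'_L equals the Gel'fand quasideterminant inverse G, the 2×2 matrix with rows ((a - b*d⁻¹*c)⁻¹, -(d*b⁻¹*a - c)⁻¹) and (-(a*c⁻¹*d - b)⁻¹, (d - c*a⁻¹*b)⁻¹); in particular the left inverse obtained from the ordering Δ' coincides with the one obtained from the ordering Δ = a*d - c*b. -/
/-- `L' - T'_L` equals the Gel'fand quasideterminant inverse `G`: the left inverse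
obtained from the ordering `Δ' = a*d - b*c` coincides with the one from `Δ = a*d - c*b`.
Here `⁅x,y⁆ = x*y - y*x` is written explicitly. -/
theorem left_inverse_other_ordering_eq_gelfand {D : Type*} [DivisionRing D]
    (a b c d Δ' : D)
    (ha : a ≠ 0) (hb : b ≠ 0) (hc : c ≠ 0) (hd : d ≠ 0)
    (hΔ'def : Δ' = a * d - b * c) (hΔ' : Δ' ≠ 0)
    (h1 : a - b * d⁻¹ * c ≠ 0) (h2 : d * b⁻¹ * a - c ≠ 0)
    (h3 : a * c⁻¹ * d - b ≠ 0) (h4 : d - c * a⁻¹ * b ≠ 0)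
    (L' TL' G : Matrix (Fin 2) (Fin 2) D)
    (hL' : L' = !![Δ'⁻¹ * d, -(Δ'⁻¹ * b); -(Δ'⁻¹ * c), Δ'⁻¹ * a])
    (hTL' : TL' =
      !![Δ'⁻¹ * (d - Δ' * (a - b * d⁻¹ * c)⁻¹),
         Δ'⁻¹ * ((d * b - b * d) - (d * a - a * d) * a⁻¹ * b) * (d - c * a⁻¹ * b)⁻¹;
         Δ'⁻¹ * (-c + Δ' * (a * c⁻¹ * d - b)⁻¹),
         Δ'⁻¹ * ((b * c - c * b) - (a * c - c * a) * a⁻¹ * b) * (d - c * a⁻¹ * b)⁻¹])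
    (hG : G = !![(a - b * d⁻¹ * c)⁻¹, -(d * b⁻¹ * a - c)⁻¹;
                 -(a * c⁻¹ * d - b)⁻¹, (d - c * a⁻¹ * b)⁻¹]) :
    L' - TL' = G := by
  subst hL' hTL' hG
  have haa : a * a⁻¹ = 1 := mul_inv_cancel₀ ha
  have hΔΔ : Δ'⁻¹ * Δ' = 1 := inv_mul_cancel₀ hΔ'
  have hYY : (d - c * a⁻¹ * b) * (d - c * a⁻¹ * b)⁻¹ = 1 := mul_inv_cancel₀ h4
  set Y := d - c * a⁻¹ * b with hY
  -- entry (0,0)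
  have e00 : Δ'⁻¹ * d - Δ'⁻¹ * (d - Δ' * (a - b * d⁻¹ * c)⁻¹) = (a - b * d⁻¹ * c)⁻¹ := by
    rw [mul_sub, ← mul_assoc, hΔΔ, one_mul]; noncomm_ring
  -- entry (1,0)
  have e10 : -(Δ'⁻¹ * c) - Δ'⁻¹ * (-c + Δ' * (a * c⁻¹ * d - b)⁻¹) = -(a * c⁻¹ * d - b)⁻¹ := by
    rw [mul_add, ← mul_assoc, hΔΔ, one_mul]; noncomm_ring
  -- entry (0,1)
  have key01 : (-b) * Y - ((d * b - b * d) - (d * a - a * d) * a⁻¹ * b)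
      = -(Δ' * (a⁻¹ * b)) := by
    rw [hΔ'def, hY]
    have h5 : d * a * a⁻¹ * b = d * b := by rw [mul_assoc d a, haa, mul_one]
    calc (-b) * (d - c * a⁻¹ * b) - ((d * b - b * d) - (d * a - a * d) * a⁻¹ * b)
        = b * (c * a⁻¹ * b) - a * (d * (a⁻¹ * b)) + (d * a * a⁻¹ * b - d * b) := by
          noncomm_ring
      _ = -((a * d - b * c) * (a⁻¹ * b)) := by rw [h5]; noncomm_ring
  have hprod : d * b⁻¹ * a - c = Y * (b⁻¹ * a) := by
    have hcan : c * a⁻¹ * b * (b⁻¹ * a) = c := by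
      rw [mul_assoc (c * a⁻¹) b (b⁻¹ * a), ← mul_assoc b b⁻¹ a, mul_inv_cancel₀ hb, one_mul,
        mul_assoc c a⁻¹ a, inv_mul_cancel₀ ha, mul_one]
    rw [hY, sub_mul, hcan, ← mul_assoc]
  have e01 : -(Δ'⁻¹ * b) - Δ'⁻¹ * ((d * b - b * d) - (d * a - a * d) * a⁻¹ * b) * Y⁻¹
      = -(d * b⁻¹ * a - c)⁻¹ := by
    have e1 : Δ'⁻¹ * ((-b) * Y) * Y⁻¹ = -(Δ'⁻¹ * b) := by
      rw [mul_assoc Δ'⁻¹ ((-b) * Y) Y⁻¹, mul_assoc (-b) Y Y⁻¹, hYY, mul_one]; noncomm_ring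
    calc -(Δ'⁻¹ * b) - Δ'⁻¹ * ((d * b - b * d) - (d * a - a * d) * a⁻¹ * b) * Y⁻¹
        = Δ'⁻¹ * ((-b) * Y) * Y⁻¹ -
            Δ'⁻¹ * ((d * b - b * d) - (d * a - a * d) * a⁻¹ * b) * Y⁻¹ := by rw [e1]
      _ = Δ'⁻¹ * ((-b) * Y - ((d * b - b * d) - (d * a - a * d) * a⁻¹ * b)) * Y⁻¹ := by
          noncomm_ring
      _ = Δ'⁻¹ * -(Δ' * (a⁻¹ * b)) * Y⁻¹ := by rw [key01]
      _ = -(Δ'⁻¹ * Δ' * (a⁻¹ * b) * Y⁻¹) := by noncomm_ring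
      _ = -(a⁻¹ * b * Y⁻¹) := by rw [hΔΔ, one_mul]
      _ = -(d * b⁻¹ * a - c)⁻¹ := by rw [hprod, mul_inv_rev, mul_inv_rev, inv_inv, mul_assoc]
  -- entry (1,1)
  have key11 : a * Y - ((b * c - c * b) - (a * c - c * a) * a⁻¹ * b) = Δ' := by
    rw [hY]
    have h5 : c * a * a⁻¹ * b = c * b := by rw [mul_assoc c a, haa, mul_one]
    calc a * (d - c * a⁻¹ * b) - ((b * c - c * b) - (a * c - c * a) * a⁻¹ * b)
        = a * d - b * c - (c * a * a⁻¹ * b - c * b) := by noncomm_ring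
      _ = Δ' := by rw [h5, sub_self, sub_zero, ← hΔ'def]
  have e11 : Δ'⁻¹ * a - Δ'⁻¹ * ((b * c - c * b) - (a * c - c * a) * a⁻¹ * b) * Y⁻¹ = Y⁻¹ := by
    have e1 : Δ'⁻¹ * (a * Y) * Y⁻¹ = Δ'⁻¹ * a := by
      rw [mul_assoc Δ'⁻¹ (a * Y) Y⁻¹, mul_assoc a Y Y⁻¹, hYY, mul_one]
    calc Δ'⁻¹ * a - Δ'⁻¹ * ((b * c - c * b) - (a * c - c * a) * a⁻¹ * b) * Y⁻¹
        = Δ'⁻¹ * (a * Y) * Y⁻¹ -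
            Δ'⁻¹ * ((b * c - c * b) - (a * c - c * a) * a⁻¹ * b) * Y⁻¹ := by rw [e1]
      _ = Δ'⁻¹ * (a * Y - ((b * c - c * b) - (a * c - c * a) * a⁻¹ * b)) * Y⁻¹ := by
          noncomm_ring
      _ = Y⁻¹ := by rw [key11, hΔΔ, one_mul]
  ext i j
  fin_cases i <;> fin_cases j
  · exact e00
  · exact e01
  · exact e10
  · exact e11
end

section
/- Let D be a division ring and a, b, c, d : D with c ≠ 0, d ≠ 0, Δ = a*d - c*b ≠ 0 and a - b*d⁻¹*c ≠ 0. Then a*c⁻¹*d - b ≠ 0 and Δ⁻¹*(-c - ⁅a,c⁆*(a - b*d⁻¹*c)⁻¹) = -(a*c⁻¹*d - b)⁻¹ (the (2,1)-entry identity in the proof that the left inverse equals the Gel'fand inverse). -/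
/-- The (2,1)-entry identity in the proof that the left inverse equals the
Gel'fand inverse. Here `⁅x,y⁆ = x*y - y*x` is written explicitly. -/
theorem entry_21_identity {D : Type*} [DivisionRing D] (a b c d Δ : D)
    (hc : c ≠ 0) (hd : d ≠ 0)
    (hΔdef : Δ = a * d - c * b) (hΔ : Δ ≠ 0)
    (h1 : a - b * d⁻¹ * c ≠ 0) :
    a * c⁻¹ * d - b ≠ 0 ∧
    Δ⁻¹ * (-c - (a * c - c * a) * (a - b * d⁻¹ * c)⁻¹) = -(a * c⁻¹ * d - b)⁻¹ := by
  set e := a - b * d⁻¹ * c with he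
  have key : (a * c⁻¹ * d - b) * (d⁻¹ * c) = e := by
    rw [he]
    simp [sub_mul, mul_assoc, mul_inv_cancel_left₀ hd, inv_mul_cancel₀ hc]
  have h2 : a * c⁻¹ * d - b ≠ 0 := by
    intro h
    rw [h, zero_mul] at key
    exact h1 key.symm
  refine ⟨h2, ?_⟩
  have hinv : (a * c⁻¹ * d - b)⁻¹ = d⁻¹ * c * e⁻¹ := by
    apply inv_eq_of_mul_eq_one_right
    rw [← mul_assoc, key, mul_inv_cancel₀ h1]
  have h3 : a * d * (d⁻¹ * c) = a * c := by
    rw [mul_assoc, mul_inv_cancel_left₀ hd]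
  have main : -c * e - (a * c - c * a) = Δ * -(d⁻¹ * c) := by
    rw [he, hΔdef, mul_neg, sub_mul, h3]
    noncomm_ring
  rw [hinv]
  have step : (-c * e - (a * c - c * a)) * e⁻¹ = -c - (a * c - c * a) * e⁻¹ := by
    rw [sub_mul, mul_assoc (-c), mul_inv_cancel₀ h1, mul_one]
  rw [← step, main, mul_assoc Δ, inv_mul_cancel_left₀ hΔ, neg_mul]
end

section
/- Let D be a division ring and a, b, c, d : D with a ≠ 0, b ≠ 0, Δ = a*d - c*b ≠ 0 and d*b⁻¹*a - c ≠ 0. Then d - c*a⁻¹*b ≠ 0 and Δ⁻¹*(a - ⁅c,a⁆*(d*b⁻¹*a - c)⁻¹) = (d - c*a⁻¹*b)⁻¹ (the (2,2)-entry identity in the proof that the left inverse equals the Gel'fand inverse). -/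
/-- The (2,2)-entry identity in the proof that the left inverse equals the
Gel'fand inverse. Here `⁅x,y⁆ = x*y - y*x` is written explicitly. -/
theorem entry_22_identity {D : Type*} [DivisionRing D] (a b c d Δ : D)
    (ha : a ≠ 0) (hb : b ≠ 0)
    (hΔdef : Δ = a * d - c * b) (hΔ : Δ ≠ 0)
    (h1 : d * b⁻¹ * a - c ≠ 0) :
    d - c * a⁻¹ * b ≠ 0 ∧
    Δ⁻¹ * (a - (c * a - a * c) * (d * b⁻¹ * a - c)⁻¹) = (d - c * a⁻¹ * b)⁻¹ := by
  set X := d * b⁻¹ * a - c with hX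
  have key : X * (a⁻¹ * b) = d - c * a⁻¹ * b := by
    rw [hX, sub_mul]
    have h2 : d * b⁻¹ * a * (a⁻¹ * b) = d := by
      rw [mul_assoc, ← mul_assoc a, mul_inv_cancel₀ ha, one_mul,
        mul_assoc, inv_mul_cancel₀ hb, mul_one]
    rw [h2, mul_assoc]
  have hZ : d - c * a⁻¹ * b ≠ 0 := by
    rw [← key]
    exact mul_ne_zero h1 (mul_ne_zero (inv_ne_zero ha) hb)
  refine ⟨hZ, ?_⟩
  have hXinv : X⁻¹ * (d - c * a⁻¹ * b) = a⁻¹ * b := by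
    rw [← key, ← mul_assoc, inv_mul_cancel₀ h1, one_mul]
  have main : (a - (c * a - a * c) * X⁻¹) * (d - c * a⁻¹ * b) = Δ := by
    rw [sub_mul, mul_assoc (c * a - a * c), hXinv, hΔdef]
    simp only [mul_sub, sub_mul, mul_assoc, mul_inv_cancel_left₀ ha]
    abel
  have hY : a - (c * a - a * c) * X⁻¹ = Δ * (d - c * a⁻¹ * b)⁻¹ :=
    (eq_mul_inv_iff_mul_eq₀ hZ).mpr main
  rw [hY, ← mul_assoc, inv_mul_cancel₀ hΔ, one_mul]
end
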